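/- Let (N,+,∘) be an R-brace. Then for each k ≥ 1: (i) N^{(k)} (defined by N^{(1)} = N, N^{(k)} = N^{(k-1)} ⋆ N) is an R-ideal of N; (ii) N^{k} (defined by N^{1} = N, N^{k} = N ⋆ N^{k-1}) is a left R-ideal of N. In particular both are R-submodules, using that r(x ⋆ y) = x ⋆ (ry). -/

import Mathlib

/-- A (left) brace structure on an abelian group `N`. -/
structure BraceStruct (N : Type*) [AddCommGroup N] where
  circ : N → N → N
  cinv : N → N
  circ_assoc : ∀ x y z, circ (circ x y) z = circ x (circ y z)
  zero_circ : ∀ x, circ 0 x = x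
  circ_zero : ∀ x, circ x 0 = x
  cinv_circ : ∀ x, circ (cinv x) x = 0
  circ_cinv : ∀ x, circ x (cinv x) = 0
  brace : ∀ x y z, circ x (y + z) = circ x y - x + circ x z

/-- The gamma function of a brace: γ_x(y) = -x + x∘y. -/
def BraceStruct.gamma {N : Type*} [AddCommGroup N] (B : BraceStruct N)
    (x y : N) : N := -x + B.circ x y

/-- A brace whose additive group is an `R`-module is an `R`-brace when every
γ_x is an `R`-module automorphism (equivalently, is `R`-linear). -/
def BraceStruct.IsRBrace (R : Type*) {N : Type*} [Ring R] [AddCommGroup N]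
    [Module R N] (B : BraceStruct N) : Prop :=
  ∀ (x : N) (r : R) (y : N), B.gamma x (r • y) = r • B.gamma x y

/-- The right series of a brace: `rightSeries B 0 = N = N^{(1)}` and
`rightSeries B k = N^{(k+1)} = N^{(k)} ⋆ N`, with x ⋆ y = γ_x(y) − y. -/
def BraceStruct.rightSeries {N : Type*} [AddCommGroup N] (B : BraceStruct N) :
    ℕ → AddSubgroup N
  | 0 => ⊤
  | k + 1 => AddSubgroup.closure
      {z | ∃ x ∈ B.rightSeries k, ∃ y : N, z = B.gamma x y - y}

/-- The left series of a brace: `leftSeries B 0 = N = N^1` and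
`leftSeries B k = N^{k+1} = N ⋆ N^k`. -/
def BraceStruct.leftSeries {N : Type*} [AddCommGroup N] (B : BraceStruct N) :
    ℕ → AddSubgroup N
  | 0 => ⊤
  | k + 1 => AddSubgroup.closure
      {z | ∃ x : N, ∃ y ∈ B.leftSeries k, z = B.gamma x y - y}

/-!
Every `γ_g` is additive, and the brace identities give
`γ_g (x ⋆ y) = (g ∘ x ∘ g⁻¹) ⋆ γ_g y` and, in an `R`-brace, `r • (x ⋆ y) = x ⋆ (r • y)`.
So `γ_g` and `r • ·` send the generators of `N^{k+1}` and `N^{(k+1)}` to generators, provided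
the previous term is closed under the relevant operation; for the right series this needs
`N^{(k)}` to be normal for `∘`, which follows from `g ∘ a ∘ g⁻¹ = γ_g a + γ_g (a ⋆ g⁻¹)`.
-/

lemma AddSubgroup.map_mem_of_mem_closure {G H : Type*} [AddGroup G] [AddGroup H]
    {S : Set G} {T : AddSubgroup H} (f : G →+ H) (h : ∀ z ∈ S, f z ∈ T) {x : G}
    (hx : x ∈ AddSubgroup.closure S) : f x ∈ T :=
  (AddSubgroup.closure_le (T.comap f)).mpr h hx

namespace BraceStruct

variable {N : Type*} [AddCommGroup N] (B : BraceStruct N)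

def star (x y : N) : N := B.gamma x y - y

lemma gamma_add (x y z : N) : B.gamma x (y + z) = B.gamma x y + B.gamma x z := by
  unfold gamma
  rw [B.brace]
  abel

def gammaHom (x : N) : N →+ N := AddMonoidHom.mk' (B.gamma x) (B.gamma_add x)

lemma gamma_neg (x y : N) : B.gamma x (-y) = -B.gamma x y :=
  map_neg (B.gammaHom x) y

lemma gamma_sub (x y z : N) : B.gamma x (y - z) = B.gamma x y - B.gamma x z :=
  map_sub (B.gammaHom x) y z

lemma circ_eq_add_gamma (x y : N) : B.circ x y = x + B.gamma x y := by
  unfold gamma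
  abel

lemma gamma_gamma (x y z : N) : B.gamma x (B.gamma y z) = B.gamma (B.circ x y) z := by
  have h : B.gamma x (B.gamma y z) = -B.gamma x y + B.gamma x (B.circ y z) := by
    rw [← B.gamma_neg, ← B.gamma_add]
    rfl
  rw [h]
  unfold gamma
  rw [← B.circ_assoc]
  abel

lemma gamma_cinv_self (x : N) : B.gamma x (B.cinv x) = -x := by
  unfold gamma
  rw [B.circ_cinv]
  abel

lemma gamma_star (g x y : N) :
    B.gamma g (B.star x y) = B.star (B.circ (B.circ g x) (B.cinv g)) (B.gamma g y) := by
  have h : B.gamma (B.circ (B.circ g x) (B.cinv g)) (B.gamma g y) = B.gamma g (B.gamma x y) := by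
    rw [B.gamma_gamma, B.circ_assoc, B.cinv_circ, B.circ_zero, B.gamma_gamma]
  rw [star, star, h, B.gamma_sub]

lemma circ_circ_cinv_eq (g a : N) :
    B.circ (B.circ g a) (B.cinv g) = B.gamma g a + B.gamma g (B.star a (B.cinv g)) := by
  rw [B.circ_eq_add_gamma, ← B.gamma_gamma, B.circ_eq_add_gamma g a, star, B.gamma_sub,
    B.gamma_cinv_self]
  abel

lemma smul_star {R : Type*} [Ring R] [Module R N] (hB : B.IsRBrace R) (r : R) (x y : N) :
    r • B.star x y = B.star x (r • y) := by
  rw [star, star, smul_sub, hB]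

lemma rightSeries_succ (k : ℕ) : B.rightSeries (k + 1) =
    AddSubgroup.closure {z | ∃ x ∈ B.rightSeries k, ∃ y : N, z = B.star x y} := rfl

lemma leftSeries_succ (k : ℕ) : B.leftSeries (k + 1) =
    AddSubgroup.closure {z | ∃ x : N, ∃ y ∈ B.leftSeries k, z = B.star x y} := rfl

lemma star_mem_rightSeries_succ {k : ℕ} {x : N} (hx : x ∈ B.rightSeries k) (y : N) :
    B.star x y ∈ B.rightSeries (k + 1) :=
  AddSubgroup.subset_closure ⟨x, hx, y, rfl⟩

lemma star_mem_leftSeries_succ {k : ℕ} (x : N) {y : N} (hy : y ∈ B.leftSeries k) :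
    B.star x y ∈ B.leftSeries (k + 1) :=
  AddSubgroup.subset_closure ⟨x, y, hy, rfl⟩

lemma rightSeries_succ_le (k : ℕ) : B.rightSeries (k + 1) ≤ B.rightSeries k := by
  induction k with
  | zero => exact le_top
  | succ k ih =>
    rw [rightSeries_succ, AddSubgroup.closure_le]
    rintro _ ⟨x, hx, y, rfl⟩
    exact B.star_mem_rightSeries_succ (ih hx) y

section RBrace

variable {R : Type*} [Ring R] [Module R N]

lemma smul_mem_rightSeries (hB : B.IsRBrace R) (k : ℕ) (r : R) {x : N}
    (hx : x ∈ B.rightSeries k) : r • x ∈ B.rightSeries k := by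
  cases k with
  | zero => trivial
  | succ k =>
    rw [rightSeries_succ] at hx
    refine AddSubgroup.map_mem_of_mem_closure (DistribSMul.toAddMonoidHom N r) ?_ hx
    rintro _ ⟨u, hu, y, rfl⟩
    change r • B.star u y ∈ _
    rw [B.smul_star hB]
    exact B.star_mem_rightSeries_succ hu (r • y)

lemma smul_mem_leftSeries (hB : B.IsRBrace R) (k : ℕ) (r : R) {x : N}
    (hx : x ∈ B.leftSeries k) : r • x ∈ B.leftSeries k := by
  induction k generalizing x with
  | zero => trivial
  | succ k ih =>
    rw [leftSeries_succ] at hx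
    refine AddSubgroup.map_mem_of_mem_closure (DistribSMul.toAddMonoidHom N r) ?_ hx
    rintro _ ⟨u, y, hy, rfl⟩
    change r • B.star u y ∈ _
    rw [B.smul_star hB]
    exact B.star_mem_leftSeries_succ u (ih hy)

end RBrace

lemma gamma_mem_leftSeries (k : ℕ) (g : N) {a : N} (ha : a ∈ B.leftSeries k) :
    B.gamma g a ∈ B.leftSeries k := by
  induction k generalizing g a with
  | zero => trivial
  | succ k ih =>
    rw [leftSeries_succ] at ha
    refine AddSubgroup.map_mem_of_mem_closure (B.gammaHom g) ?_ ha
    rintro _ ⟨u, y, hy, rfl⟩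
    change B.gamma g (B.star u y) ∈ _
    rw [B.gamma_star]
    exact B.star_mem_leftSeries_succ _ (ih g hy)

lemma gamma_mem_rightSeries_succ {k : ℕ}
    (hconj : ∀ g a : N, a ∈ B.rightSeries k → B.circ (B.circ g a) (B.cinv g) ∈ B.rightSeries k)
    (g : N) {a : N} (ha : a ∈ B.rightSeries (k + 1)) :
    B.gamma g a ∈ B.rightSeries (k + 1) := by
  rw [rightSeries_succ] at ha
  refine AddSubgroup.map_mem_of_mem_closure (B.gammaHom g) ?_ ha
  rintro _ ⟨u, hu, y, rfl⟩
  change B.gamma g (B.star u y) ∈ _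
  rw [B.gamma_star]
  exact B.star_mem_rightSeries_succ (hconj g u hu) _

lemma circ_circ_cinv_mem_rightSeries {k : ℕ}
    (hgamma : ∀ g a : N, a ∈ B.rightSeries k → B.gamma g a ∈ B.rightSeries k)
    (g : N) {a : N} (ha : a ∈ B.rightSeries k) :
    B.circ (B.circ g a) (B.cinv g) ∈ B.rightSeries k := by
  have hstar : B.star a (B.cinv g) ∈ B.rightSeries k :=
    B.rightSeries_succ_le k (B.star_mem_rightSeries_succ ha _)
  rw [B.circ_circ_cinv_eq]
  exact add_mem (hgamma g a ha) (hgamma g _ hstar)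

lemma gamma_mem_rightSeries (k : ℕ) (g : N) {a : N} (ha : a ∈ B.rightSeries k) :
    B.gamma g a ∈ B.rightSeries k := by
  induction k generalizing g a with
  | zero => trivial
  | succ k ih =>
    exact B.gamma_mem_rightSeries_succ
      (fun g a ha => B.circ_circ_cinv_mem_rightSeries (fun g a ha => ih g ha) g ha) g ha

end BraceStruct

/-- in an R-brace, each term N^{(k)} of the right series is an
R-ideal (an R-submodule, γ(N)-invariant and normal for ∘), and each term N^k of
the left series is a left R-ideal (an R-submodule which is γ(N)-invariant). -/
theorem series_are_R_ideals
    {R N : Type*} [Ring R] [AddCommGroup N] [Module R N]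
    (B : BraceStruct N) (hB : B.IsRBrace R) :
    ∀ k : ℕ,
      ((∀ (r : R) (x : N), x ∈ B.rightSeries k → r • x ∈ B.rightSeries k) ∧
       (∀ g a : N, a ∈ B.rightSeries k → B.gamma g a ∈ B.rightSeries k) ∧
       (∀ g a : N, a ∈ B.rightSeries k →
          B.circ (B.circ g a) (B.cinv g) ∈ B.rightSeries k)) ∧
      ((∀ (r : R) (x : N), x ∈ B.leftSeries k → r • x ∈ B.leftSeries k) ∧
       (∀ g a : N, a ∈ B.leftSeries k → B.gamma g a ∈ B.leftSeries k)) := by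
  intro k
  have hgamma : ∀ g a : N, a ∈ B.rightSeries k → B.gamma g a ∈ B.rightSeries k :=
    fun g _ ha => B.gamma_mem_rightSeries k g ha
  exact ⟨⟨fun r _ hx => B.smul_mem_rightSeries hB k r hx, hgamma,
      fun g _ ha => B.circ_circ_cinv_mem_rightSeries hgamma g ha⟩,
    fun r _ hx => B.smul_mem_leftSeries hB k r hx, fun g _ ha => B.gamma_mem_leftSeries k g ha⟩
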